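/- Let (𝔪, 𝔤, ▷, φ) be a crossed module of real Lie algebras. Then the bracket ⟦·,·⟧ on K = Hom(𝔤, 𝔪) ⊕ 𝔤 defined by ⟦(A,u),(B,v)⟧ = (A∘φ∘B − B∘φ∘A + A∘ad_v − ad¹_v∘A + (·▷A(v)) + ad¹_u∘B − B∘ad_u , [u,v]_𝔤 + φ(A(v))) satisfies the left Leibniz identity ⟦X, ⟦Y, Z⟧⟧ = ⟦⟦X, Y⟧, Z⟧ + ⟦Y, ⟦X, Z⟧⟧ for all X, Y, Z ∈ K. -/
import Mathlib


/-- The adjoint action `ad_v(x) = ⁅v, x⁆` as a linear map. -/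
def adG {g : Type*} [LieRing g] [LieAlgebra ℝ g] (v : g) : g →ₗ[ℝ] g where
  toFun x := ⁅v, x⁆
  map_add' x y := lie_add v x y
  map_smul' c x := lie_smul c v x

/-- The Dorfman bracket on `K = Hom(𝔤, 𝔪) ⊕ 𝔤` associated to a crossed module of Lie
algebras with action `a` and structure map `φ`:
`⟦(A,u),(B,v)⟧ = (A∘φ∘B − B∘φ∘A + A∘ad_v − ad¹_v∘A + (·▷A(v)) + ad¹_u∘B − B∘ad_u,
[u,v]_𝔤 + φ(A(v)))`. -/
def cmBr {g m : Type*} [LieRing g] [LieAlgebra ℝ g] [LieRing m] [LieAlgebra ℝ m]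
    (a : g →ₗ[ℝ] m →ₗ[ℝ] m) (φ : m →ₗ[ℝ] g)
    (X Y : (g →ₗ[ℝ] m) × g) : (g →ₗ[ℝ] m) × g :=
  (X.1 ∘ₗ φ ∘ₗ Y.1 - Y.1 ∘ₗ φ ∘ₗ X.1
     + X.1 ∘ₗ adG Y.2 - a Y.2 ∘ₗ X.1 + a.flip (X.1 Y.2)
     + a X.2 ∘ₗ Y.1 - Y.1 ∘ₗ adG X.2,
   ⁅X.2, Y.2⁆ + φ (X.1 Y.2))

/-- The `𝔪`-valued pairing `⟨(A,u),(B,v)⟩_𝔪 = (1/2)(A(v) + B(u))` on `Hom(𝔤,𝔪) ⊕ 𝔤`. -/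
noncomputable def cmPair {g m : Type*} [LieRing g] [LieAlgebra ℝ g]
    [LieRing m] [LieAlgebra ℝ m]
    (X Y : (g →ₗ[ℝ] m) × g) : m :=
  ((2 : ℝ)⁻¹) • (X.1 Y.2 + Y.1 X.2)

/-- The anchor `ρ(A,u)(ξ) = u ▷ ξ + A(φ(ξ))`. -/
def cmRho {g m : Type*} [LieRing g] [LieAlgebra ℝ g] [LieRing m] [LieAlgebra ℝ m]
    (a : g →ₗ[ℝ] m →ₗ[ℝ] m) (φ : m →ₗ[ℝ] g)
    (X : (g →ₗ[ℝ] m) × g) : m →ₗ[ℝ] m :=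
  a X.2 + X.1 ∘ₗ φ

/-- The coanchor `ρ⋆(ξ) = ((x ↦ x ▷ ξ), φ(ξ))`. -/
def cmRhoStar {g m : Type*} [LieRing g] [LieAlgebra ℝ g] [LieRing m] [LieAlgebra ℝ m]
    (a : g →ₗ[ℝ] m →ₗ[ℝ] m) (φ : m →ₗ[ℝ] g)
    (ξ : m) : (g →ₗ[ℝ] m) × g :=
  (a.flip ξ, φ ξ)

/-- For a crossed module of real Lie algebras `(𝔪, 𝔤, ▷, φ)`, the bracket on
`K = Hom(𝔤,𝔪) ⊕ 𝔤` satisfies the left Leibniz identity. -/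
theorem stmt5 {g m : Type*} [LieRing g] [LieAlgebra ℝ g] [LieRing m] [LieAlgebra ℝ m]
    (a : g →ₗ[ℝ] m →ₗ[ℝ] m) (φ : m →ₗ[ℝ] g)
    (ha_hom : ∀ x y : g, a ⁅x, y⁆ = a x ∘ₗ a y - a y ∘ₗ a x)
    (ha_der : ∀ (x : g) (ξ η : m), a x ⁅ξ, η⁆ = ⁅a x ξ, η⁆ + ⁅ξ, a x η⁆)
    (hφ : ∀ ξ η : m, φ ⁅ξ, η⁆ = ⁅φ ξ, φ η⁆)
    (hcm1 : ∀ ξ η : m, a (φ ξ) η = ⁅ξ, η⁆)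
    (hcm2 : ∀ (x : g) (ξ : m), φ (a x ξ) = ⁅x, φ ξ⁆) :
    ∀ X Y Z : (g →ₗ[ℝ] m) × g,
      cmBr a φ X (cmBr a φ Y Z) = cmBr a φ (cmBr a φ X Y) Z + cmBr a φ Y (cmBr a φ X Z) := by
  intro X Y Z
  obtain ⟨A, u⟩ := X; obtain ⟨B, v⟩ := Y; obtain ⟨C, w⟩ := Z
  have ha_hom' : ∀ (x y : g) (ξ : m), a ⁅x, y⁆ ξ = a x (a y ξ) - a y (a x ξ) := by
    intro x y ξ; rw [ha_hom]; rfl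
  refine Prod.ext ?_ ?_
  · ext x
    simp only [cmBr, adG, Prod.fst_add, Prod.snd_add, LinearMap.add_apply,
      LinearMap.sub_apply, LinearMap.comp_apply, LinearMap.coe_mk, AddHom.coe_mk,
      LinearMap.flip_apply, map_add, map_sub, lie_add, add_lie, lie_sub, sub_lie,
      ha_hom', ha_der, hφ, hcm1, hcm2, lie_lie]
    simp only [← lie_skew (A x) (B w), ← lie_skew (A w) (B x), ← lie_skew (A v) (C x),
      ← lie_skew x (φ (B w)), ← lie_skew x (φ (A v)), ← lie_skew x (φ (A w)), map_neg]
    abel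
  · simp only [cmBr, Prod.fst_add, Prod.snd_add, LinearMap.add_apply,
      LinearMap.sub_apply, LinearMap.comp_apply, LinearMap.coe_mk, AddHom.coe_mk, adG,
      LinearMap.flip_apply, map_add, map_sub, lie_add, add_lie,
      ha_hom', hφ, hcm2, lie_lie]
    simp only [← lie_skew w (φ (A v)), map_neg]
    abel
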